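/- There is a bijection between standard barely set-valued tableaux of shape 2×b and restricted bicolored Motzkin paths of length 2b+1 with exactly one horizontal step. -/

import Mathlib

/-- Steps of a bicolored Motzkin path: up, down, red horizontal, blue horizontal. -/
inductive MStep where
  | U : MStep
  | D : MStep
  | Hr : MStep
  | Hb : MStep
deriving DecidableEq

/-- The vertical displacement of a step. -/
def sval : MStep → ℤ
  | .U => 1
  | .D => -1
  | _ => 0

/-- The height of the path after `j` steps. -/
def hgt (ℓ : ℕ) (s : Fin ℓ → MStep) (j : ℕ) : ℤ :=
  ∑ k ∈ Finset.range j, if h : k < ℓ then sval (s ⟨k, h⟩) else 0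

/-- A restricted bicolored Motzkin path of length `ℓ`: ends at height 0, never goes
below the x-axis, red horizontal steps never occur at height zero, and blue horizontal
steps never occur before the first down step. -/
def IsRBM (ℓ : ℕ) (s : Fin ℓ → MStep) : Prop :=
  hgt ℓ s ℓ = 0 ∧ (∀ j ≤ ℓ, 0 ≤ hgt ℓ s j) ∧
  (∀ j : Fin ℓ, s j = MStep.Hr → hgt ℓ s j ≠ 0) ∧
  (∀ j : Fin ℓ, s j = MStep.Hb → ∃ k : Fin ℓ, k < j ∧ s k = MStep.D)

/-- A standard barely set-valued tableau of shape `2×b`: nonempty entry sets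
partitioning `{1,…,2b+1}`, exactly one box a doubleton, strictly increasing
southeastwards (`max < min`). -/
def IsBSVT2 (b : ℕ) (S : Fin 2 × Fin b → Finset ℕ) : Prop :=
  (∀ p, (S p).Nonempty) ∧
  (∀ k, k ∈ Finset.Icc 1 (2 * b + 1) ↔ ∃ p, k ∈ S p) ∧
  (∀ p q, p ≠ q → Disjoint (S p) (S q)) ∧
  (∃ p₀, (S p₀).card = 2 ∧ ∀ p, p ≠ p₀ → (S p).card = 1) ∧
  (∀ p q, p < q → ∀ x ∈ S p, ∀ y ∈ S q, x < y)

/-!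
Read the entries `1, …, 2b+1` in increasing order. An entry that is the minimum of its box is a
vertical step (`U` in the top row, `D` in the bottom row); the extra entry of the doubleton box is a
horizontal step of its row's colour. Column strictness is the ballot condition; the extra entry of
a top box precedes the minimum of the bottom box below it, so it occurs at positive height, and the
extra entry of a bottom box follows its own minimum, a `D` step. Conversely, entry `k` goes to the
row of step `k` and to the column counted by the vertical steps of that row up to it.
-/

open Finset

namespace MStep

/-- `vert i` and `horiz i` are the steps recorded by an entry of row `i` of a tableau that is,
respectively is not, the minimum of its box. -/
def vert : Fin 2 → MStep := ![U, D]

def horiz : Fin 2 → MStep := ![Hr, Hb]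

def row : MStep → Fin 2
  | U => 0
  | Hr => 0
  | D => 1
  | Hb => 1

@[simp] lemma vert_zero : vert 0 = U := rfl

@[simp] lemma vert_one : vert 1 = D := rfl

@[simp] lemma horiz_zero : horiz 0 = Hr := rfl

@[simp] lemma row_vert (i : Fin 2) : (vert i).row = i := by fin_cases i <;> rfl

@[simp] lemma row_horiz (i : Fin 2) : (horiz i).row = i := by fin_cases i <;> rfl

lemma vert_ne_horiz (i j : Fin 2) : vert i ≠ horiz j := by
  fin_cases i <;> fin_cases j <;> decide

lemma eq_vert_or_eq_horiz (e : MStep) : e = vert e.row ∨ e = horiz e.row := by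
  cases e <;> decide

end MStep

open MStep

lemma exists_eq_two_of_sum_eq_card_add_one {ι : Type*} [Fintype ι] [DecidableEq ι]
    {f : ι → ℕ} (hf : ∀ i, 0 < f i) (hsum : ∑ i, f i = Fintype.card ι + 1) :
    ∃ i₀, f i₀ = 2 ∧ ∀ i ≠ i₀, f i = 1 := by
  have hexcess : ∑ i, (f i - 1) = 1 := by
    have : ∑ i, f i = ∑ i, ((f i - 1) + 1) := sum_congr rfl fun i _ => by have := hf i; omega
    rw [sum_add_distrib, sum_const, card_univ, smul_eq_mul, mul_one] at this
    omega
  obtain ⟨i₀, -, hi₀⟩ := exists_ne_zero_of_sum_ne_zero (hexcess ▸ one_ne_zero)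
  have hle (i : ι) : f i - 1 ≤ 1 :=
    hexcess ▸ single_le_sum (f := fun i => f i - 1) (fun _ _ => Nat.zero_le _) (mem_univ i)
  refine ⟨i₀, by have := hle i₀; omega, fun i hi => ?_⟩
  have hpair := sum_le_sum_of_subset (f := fun i => f i - 1) (subset_univ {i, i₀})
  rw [sum_pair hi, hexcess] at hpair
  have := hf i
  omega

def stepCount (t : ℕ → MStep) (e : MStep) (k : ℕ) : ℕ := #{j ∈ range k | t j = e}

section StepCount

variable (t : ℕ → MStep) (e : MStep)

lemma stepCount_succ (k : ℕ) :
    stepCount t e (k + 1) = stepCount t e k + if t k = e then 1 else 0 := by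
  simp only [stepCount, range_add_one, filter_insert]
  split_ifs <;> simp [card_insert_of_notMem]

lemma stepCount_mono {k k' : ℕ} (h : k ≤ k') : stepCount t e k ≤ stepCount t e k' :=
  card_le_card (filter_subset_filter _ (range_subset_range.2 h))

lemma lt_of_stepCount_lt {k k' : ℕ} (h : stepCount t e k < stepCount t e k') : k < k' := by
  by_contra! hle
  exact (stepCount_mono t e hle).not_gt h

lemma stepCount_pos_iff {k : ℕ} : 0 < stepCount t e k ↔ ∃ j < k, t j = e := by
  simp [stepCount, card_pos, Finset.Nonempty]

lemma stepCount_U_add_D_add_Hr_add_Hb (k : ℕ) :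
    stepCount t U k + stepCount t D k + (stepCount t Hr k + stepCount t Hb k) = k := by
  induction k with
  | zero => simp [stepCount]
  | succ k ih =>
    simp only [stepCount_succ]
    cases t k <;> simp <;> omega

lemma exists_stepCount_eq {n v : ℕ} (h : v < stepCount t e n) :
    ∃ j < n, t j = e ∧ stepCount t e j = v := by
  induction n with
  | zero => simp [stepCount] at h
  | succ n ih =>
    by_cases hv : v < stepCount t e n
    · obtain ⟨j, hj, hje, hjv⟩ := ih hv
      exact ⟨j, by omega, hje, hjv⟩
    · rw [stepCount_succ] at h
      split_ifs at h with hn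
      · exact ⟨n, by omega, hn, by omega⟩
      · omega

/-- `J` lists the occurrences of `e` by one-based position. -/
lemma stepCount_eq_card_filter {n : ℕ} (J : Fin n → ℕ) (hJ : Function.Injective J)
    (hJ0 : ∀ c, 0 < J c) {k : ℕ} (hiff : ∀ j < k, t j = e ↔ ∃ c, J c = j + 1) :
    stepCount t e k = #{c | J c ≤ k} := by
  symm
  refine card_bij (fun c _ => J c - 1) (fun c hc => ?_) (fun c _ c' _ h => ?_) (fun j hj => ?_)
  · have := hJ0 c
    simp only [mem_filter, mem_univ, true_and, mem_range] at hc ⊢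
    exact ⟨by omega, (hiff _ (by omega)).2 ⟨c, by omega⟩⟩
  · have := hJ0 c; have := hJ0 c'
    exact hJ (by omega)
  · simp only [mem_filter, mem_range] at hj
    obtain ⟨c, hc⟩ := (hiff j hj.1).1 hj.2
    exact ⟨c, by simp; omega, by omega⟩

end StepCount

/-- A path of length `ℓ` as a sequence, padded with (height-neutral) `Hr` steps. -/
def toSeq (ℓ : ℕ) (s : Fin ℓ → MStep) (j : ℕ) : MStep :=
  if h : j < ℓ then s ⟨j, h⟩ else Hr

lemma toSeq_of_lt {ℓ : ℕ} (s : Fin ℓ → MStep) {j : ℕ} (h : j < ℓ) :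
    toSeq ℓ s j = s ⟨j, h⟩ :=
  dif_pos h

lemma hgt_eq_stepCount_sub (ℓ : ℕ) (s : Fin ℓ → MStep) (j : ℕ) :
    hgt ℓ s j = (stepCount (toSeq ℓ s) U j : ℤ) - stepCount (toSeq ℓ s) D j := by
  induction j with
  | zero => simp [hgt, stepCount]
  | succ j ih =>
    rw [hgt, sum_range_succ, ← hgt, ih, stepCount_succ, stepCount_succ]
    by_cases h : j < ℓ
    · rw [dif_pos h, ← toSeq_of_lt s h]
      cases toSeq ℓ s j <;> simp [sval] <;> ring
    · simp [h, toSeq]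

lemma card_filter_eq_stepCount {ℓ : ℕ} (s : Fin ℓ → MStep) (e : MStep) :
    #{j | s j = e} = stepCount (toSeq ℓ s) e ℓ := by
  rw [stepCount, card_filter, card_filter, ← Fin.sum_univ_eq_sum_range]
  simp [toSeq_of_lt]

section Tableau

variable {b : ℕ} (S : Fin 2 × Fin b → Finset ℕ)

def InTopRow (k : ℕ) : Prop := ∃ c, k ∈ S (0, c)

def IsBoxMin (k : ℕ) : Prop := ∃ p, k ∈ S p ∧ ∀ m ∈ S p, k ≤ m

open Classical in
noncomputable def tableauStep (k : ℕ) : MStep :=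
  if InTopRow S k then (if IsBoxMin S k then U else Hr)
  else (if IsBoxMin S k then D else Hb)

/-- Step `j` of the path records the entry `j + 1`. -/
noncomputable def tableauPath (j : Fin (2 * b + 1)) : MStep :=
  tableauStep S (j + 1)

variable {S} (hS : IsBSVT2 b S)
include hS

lemma IsBSVT2.eq_of_mem {k : ℕ} {p q : Fin 2 × Fin b} (hp : k ∈ S p) (hq : k ∈ S q) :
    p = q := by
  by_contra hne
  exact disjoint_left.1 (hS.2.2.1 p q hne) hp hq

lemma IsBSVT2.mem_Icc_of_mem {k : ℕ} {p : Fin 2 × Fin b} (h : k ∈ S p) :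
    1 ≤ k ∧ k ≤ 2 * b + 1 :=
  mem_Icc.1 ((hS.2.1 k).2 ⟨p, h⟩)

lemma IsBSVT2.exists_mem {k : ℕ} (h1 : 1 ≤ k) (h2 : k ≤ 2 * b + 1) : ∃ p, k ∈ S p :=
  (hS.2.1 k).1 (mem_Icc.2 ⟨h1, h2⟩)

noncomputable def IsBSVT2.boxMin (p : Fin 2 × Fin b) : ℕ := (S p).min' (hS.1 p)

lemma IsBSVT2.boxMin_mem (p : Fin 2 × Fin b) : hS.boxMin p ∈ S p := min'_mem _ _

lemma IsBSVT2.boxMin_le {k : ℕ} {p : Fin 2 × Fin b} (hk : k ∈ S p) : hS.boxMin p ≤ k :=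
  min'_le _ _ hk

lemma IsBSVT2.lt_boxMin {k : ℕ} {p q : Fin 2 × Fin b} (hpq : p < q) (hk : k ∈ S p) :
    k < hS.boxMin q :=
  hS.2.2.2.2 p q hpq k hk _ (hS.boxMin_mem q)

lemma IsBSVT2.eq_boxMin_iff {k : ℕ} {p : Fin 2 × Fin b} (hk : k ∈ S p) :
    k = hS.boxMin p ↔ ∀ m ∈ S p, k ≤ m :=
  ⟨fun h _ hm => h ▸ hS.boxMin_le hm,
    fun h => le_antisymm (h _ (hS.boxMin_mem p)) (hS.boxMin_le hk)⟩

lemma IsBSVT2.isBoxMin_iff {k : ℕ} {p : Fin 2 × Fin b} (hk : k ∈ S p) :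
    IsBoxMin S k ↔ k = hS.boxMin p := by
  rw [hS.eq_boxMin_iff hk]
  refine ⟨fun ⟨q, hq, hmin⟩ => hS.eq_of_mem hq hk ▸ hmin, fun h => ⟨p, hk, h⟩⟩

lemma IsBSVT2.tableauStep_of_mem {k : ℕ} {i : Fin 2} {c : Fin b} (hk : k ∈ S (i, c)) :
    tableauStep S k = if k = hS.boxMin (i, c) then vert i else horiz i := by
  have hrow : InTopRow S k ↔ i = 0 := by
    refine ⟨fun ⟨c', hc'⟩ => congrArg Prod.fst (hS.eq_of_mem hk hc'), ?_⟩
    rintro rfl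
    exact ⟨c, hk⟩
  have hmin := hS.isBoxMin_iff hk
  by_cases h : k = hS.boxMin (i, c) <;> fin_cases i <;> simp_all [tableauStep, vert, horiz]

lemma IsBSVT2.boxMin_le_iff {k : ℕ} {i : Fin 2} {c c' : Fin b} (hk : k ∈ S (i, c)) :
    hS.boxMin (i, c') ≤ k ↔ c' ≤ c := by
  constructor
  · intro h
    by_contra! hc
    have := hS.lt_boxMin (Prod.mk_lt_mk_iff_right.2 hc) hk
    omega
  · intro h
    rcases h.eq_or_lt with rfl | hc
    · exact hS.boxMin_le hk
    · exact (hS.lt_boxMin (Prod.mk_lt_mk_iff_right.2 hc) (hS.boxMin_mem _)).le.trans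
        (hS.boxMin_le hk)

lemma IsBSVT2.boxMin_top_lt (c : Fin b) : hS.boxMin (0, c) < hS.boxMin (1, c) :=
  hS.lt_boxMin (Prod.mk_lt_mk_iff_left.2 (by decide)) (hS.boxMin_mem _)

lemma IsBSVT2.toSeq_tableauPath_eq_vert_iff (i : Fin 2) {j : ℕ} (hj : j < 2 * b + 1) :
    toSeq (2 * b + 1) (tableauPath S) j = vert i ↔ ∃ c, hS.boxMin (i, c) = j + 1 := by
  rw [toSeq_of_lt _ hj]
  obtain ⟨⟨i', c'⟩, hk⟩ := hS.exists_mem (k := j + 1) (by omega) (by omega)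
  change tableauStep S (j + 1) = vert i ↔ _
  constructor
  · rw [hS.tableauStep_of_mem hk]
    split_ifs with hmin
    · intro h
      obtain rfl : i' = i := by simpa using congrArg MStep.row h
      exact ⟨c', hmin.symm⟩
    · exact fun h => absurd h.symm (vert_ne_horiz _ _)
  · rintro ⟨c, hc⟩
    have hmem := hS.boxMin_mem (i, c)
    rw [hc] at hmem
    rw [hS.tableauStep_of_mem hmem, if_pos hc.symm]

lemma IsBSVT2.stepCount_vert {i : Fin 2} {k : ℕ} (hk : k ≤ 2 * b + 1) :
    stepCount (toSeq (2 * b + 1) (tableauPath S)) (vert i) k = #{c | hS.boxMin (i, c) ≤ k} := by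
  refine stepCount_eq_card_filter _ _ (fun c => hS.boxMin (i, c)) (fun c c' h => ?_)
    (fun c => (hS.mem_Icc_of_mem (hS.boxMin_mem (i, c))).1)
    (fun j hj => hS.toSeq_tableauPath_eq_vert_iff i (by omega))
  have h : hS.boxMin (i, c) = hS.boxMin (i, c') := h
  have := hS.eq_of_mem (hS.boxMin_mem (i, c)) (h ▸ hS.boxMin_mem (i, c'))
  simpa using this

end Tableau

/-- The counting form of a restricted bicolored Motzkin path of length `2b+1` with a single
horizontal step, read off its padded sequence `t`. -/
structure IsRBMSeq (b : ℕ) (t : ℕ → MStep) : Prop where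
  count_U : stepCount t U (2 * b + 1) = b
  count_D : stepCount t D (2 * b + 1) = b
  ballot : ∀ j ≤ 2 * b + 1, stepCount t D j ≤ stepCount t U j
  red : ∀ j < 2 * b + 1, t j = Hr → stepCount t D j < stepCount t U j
  blue : ∀ j < 2 * b + 1, t j = Hb → 0 < stepCount t D j

lemma isRBM_and_card_eq_one_iff {b : ℕ} (s : Fin (2 * b + 1) → MStep) :
    IsRBM (2 * b + 1) s ∧ #{j | s j = Hr ∨ s j = Hb} = 1 ↔
      IsRBMSeq b (toSeq (2 * b + 1) s) := by
  have hH : #{j | s j = Hr ∨ s j = Hb} =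
      stepCount (toSeq (2 * b + 1) s) Hr (2 * b + 1) +
        stepCount (toSeq (2 * b + 1) s) Hb (2 * b + 1) := by
    rw [filter_or, card_union_of_disjoint (disjoint_filter.2 fun _ _ h => by simp [h]),
      card_filter_eq_stepCount, card_filter_eq_stepCount]
  have htot := stepCount_U_add_D_add_Hr_add_Hb (toSeq (2 * b + 1) s) (2 * b + 1)
  have hheight := hgt_eq_stepCount_sub (2 * b + 1) s
  have ht {j : ℕ} (hj : j < 2 * b + 1) : toSeq (2 * b + 1) s j = s ⟨j, hj⟩ := toSeq_of_lt s hj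
  constructor
  · rintro ⟨⟨hend, hnonneg, hred, hblue⟩, hone⟩
    have hUD := hheight (2 * b + 1)
    rw [hend] at hUD
    refine ⟨by omega, by omega, fun j hj => ?_, fun j hj hHr => ?_, fun j hj hHb => ?_⟩
    · have := hnonneg j hj
      rw [hheight] at this
      omega
    · have h1 : hgt (2 * b + 1) s j ≠ 0 := hred ⟨j, hj⟩ (ht hj ▸ hHr)
      have h2 := hnonneg j hj.le
      rw [hheight] at h1 h2
      omega
    · obtain ⟨k, hk, hkD⟩ := hblue ⟨j, hj⟩ (ht hj ▸ hHb)
      exact (stepCount_pos_iff _ _).2 ⟨k, hk, (ht k.isLt).trans hkD⟩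
  · rintro ⟨hU, hD, hballot, hred, hblue⟩
    refine ⟨⟨?_, fun j hj => ?_, fun j hHr => ?_, fun j hHb => ?_⟩, by omega⟩
    · rw [hheight, hU, hD, sub_self]
    · have := hballot j hj
      rw [hheight]
      omega
    · have := hred j j.isLt (ht j.isLt ▸ hHr)
      rw [hheight]
      omega
    · obtain ⟨k, hk, hkD⟩ := (stepCount_pos_iff _ _).1 (hblue j j.isLt (ht j.isLt ▸ hHb))
      exact ⟨⟨k, by omega⟩, hk, (ht _).symm.trans hkD⟩

/-- Inverse to `tableauPath`; columns are counted from `0`, entries and vertical steps from `1`. -/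
def pathBox (b : ℕ) (t : ℕ → MStep) (p : Fin 2 × Fin b) : Finset ℕ :=
  {k ∈ Icc 1 (2 * b + 1) | (t (k - 1)).row = p.1 ∧ stepCount t (vert p.1) k = p.2 + 1}

lemma mem_pathBox {b : ℕ} {t : ℕ → MStep} {k : ℕ} {i : Fin 2} {c : Fin b} :
    k ∈ pathBox b t (i, c) ↔
      (1 ≤ k ∧ k ≤ 2 * b + 1) ∧ (t (k - 1)).row = i ∧ stepCount t (vert i) k = c + 1 := by
  simp [pathBox]

lemma eq_of_mem_pathBox {b : ℕ} {t : ℕ → MStep} {k : ℕ} {p q : Fin 2 × Fin b}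
    (hp : k ∈ pathBox b t p) (hq : k ∈ pathBox b t q) : p = q := by
  obtain ⟨i, c⟩ := p
  obtain ⟨i', c'⟩ := q
  rw [mem_pathBox] at hp hq
  obtain rfl : i = i' := hp.2.1.symm.trans hq.2.1
  simp only [Prod.mk.injEq, true_and]
  exact Fin.ext (by omega)

lemma disjoint_pathBox {b : ℕ} {t : ℕ → MStep} {p q : Fin 2 × Fin b} (hpq : p ≠ q) :
    Disjoint (pathBox b t p) (pathBox b t q) :=
  disjoint_left.2 fun _ hp hq => hpq (eq_of_mem_pathBox hp hq)

lemma pathBox_subset_Icc {b : ℕ} {t : ℕ → MStep} (p : Fin 2 × Fin b) :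
    pathBox b t p ⊆ Icc 1 (2 * b + 1) :=
  filter_subset _ _

section Forward

variable {b : ℕ} {S : Fin 2 × Fin b → Finset ℕ} (hS : IsBSVT2 b S)
include hS

lemma IsBSVT2.exists_boxMin_le_of_eq_horiz {i : Fin 2} {j : ℕ} (hj : j < 2 * b + 1)
    (h : toSeq (2 * b + 1) (tableauPath S) j = horiz i) :
    ∃ c, j + 1 ∈ S (i, c) ∧ hS.boxMin (i, c) ≤ j := by
  obtain ⟨⟨i', c⟩, hk⟩ := hS.exists_mem (k := j + 1) (by omega) (by omega)
  rw [toSeq_of_lt _ hj] at h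
  change tableauStep S (j + 1) = horiz i at h
  rw [hS.tableauStep_of_mem hk] at h
  split_ifs at h with hmin
  · exact absurd h (vert_ne_horiz _ _)
  · obtain rfl : i' = i := by simpa using congrArg MStep.row h
    exact ⟨c, hk, by have := hS.boxMin_le hk; omega⟩

lemma IsBSVT2.isRBMSeq : IsRBMSeq b (toSeq (2 * b + 1) (tableauPath S)) := by
  have hU {k : ℕ} (hk : k ≤ 2 * b + 1) : stepCount (toSeq (2 * b + 1) (tableauPath S)) U k =
      #{c | hS.boxMin (0, c) ≤ k} := hS.stepCount_vert (i := 0) hk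
  have hD {k : ℕ} (hk : k ≤ 2 * b + 1) : stepCount (toSeq (2 * b + 1) (tableauPath S)) D k =
      #{c | hS.boxMin (1, c) ≤ k} := hS.stepCount_vert (i := 1) hk
  have hall (i : Fin 2) : #{c | hS.boxMin (i, c) ≤ 2 * b + 1} = b := by
    rw [filter_true_of_mem fun c _ => (hS.mem_Icc_of_mem (hS.boxMin_mem (i, c))).2,
      card_univ, Fintype.card_fin]
  have hsub (j : ℕ) :
      ({c | hS.boxMin (1, c) ≤ j} : Finset (Fin b)) ⊆
        ({c | hS.boxMin (0, c) ≤ j} : Finset (Fin b)) :=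
    monotone_filter_right _ fun c _ h => (hS.boxMin_top_lt c).le.trans h
  refine ⟨(hU le_rfl).trans (hall 0), (hD le_rfl).trans (hall 1), fun j hj => ?_,
    fun j hj hHr => ?_, fun j hj hHb => ?_⟩
  · rw [hU hj, hD hj]
    exact card_le_card (hsub j)
  · obtain ⟨c, hc, hcj⟩ := hS.exists_boxMin_le_of_eq_horiz (i := 0) hj hHr
    have hc1 := hS.lt_boxMin (Prod.mk_lt_mk_iff_left.2 (by decide : (0 : Fin 2) < 1)) hc
    rw [hU hj.le, hD hj.le]
    exact card_lt_card ((ssubset_iff_of_subset (hsub j)).2 ⟨c, by simpa, by simp; omega⟩)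
  · obtain ⟨c, -, hcj⟩ := hS.exists_boxMin_le_of_eq_horiz (i := 1) hj hHb
    rw [hD hj.le]
    exact card_pos.2 ⟨c, by simpa⟩

lemma IsBSVT2.mem_pathBox_of_mem {k : ℕ} {p : Fin 2 × Fin b} (hk : k ∈ S p) :
    k ∈ pathBox b (toSeq (2 * b + 1) (tableauPath S)) p := by
  obtain ⟨i, c⟩ := p
  have hbd := hS.mem_Icc_of_mem hk
  have hstep : toSeq (2 * b + 1) (tableauPath S) (k - 1) = tableauStep S k := by
    rw [toSeq_of_lt _ (by omega)]
    exact congrArg (tableauStep S) (by simp; omega)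
  have hcols : ({c' | hS.boxMin (i, c') ≤ k} : Finset (Fin b)) = Iic c := by
    ext c'
    simpa using hS.boxMin_le_iff hk
  refine mem_pathBox.2 ⟨hbd, ?_, ?_⟩
  · rw [hstep, hS.tableauStep_of_mem hk]
    split_ifs <;> simp
  · rw [hS.stepCount_vert hbd.2, hcols, Fin.card_Iic]

lemma IsBSVT2.pathBox_tableauPath : pathBox b (toSeq (2 * b + 1) (tableauPath S)) = S := by
  funext p
  ext k
  refine ⟨fun hk => ?_, hS.mem_pathBox_of_mem⟩
  obtain ⟨i, c⟩ := p
  obtain ⟨hbd, -⟩ := mem_pathBox.1 hk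
  obtain ⟨q, hq⟩ := hS.exists_mem hbd.1 hbd.2
  rwa [eq_of_mem_pathBox hk (hS.mem_pathBox_of_mem hq)]

end Forward

lemma le_of_mem_pathBox_of_eq_vert {b : ℕ} {t : ℕ → MStep} {k m : ℕ} {i : Fin 2} {c : Fin b}
    (hk : k ∈ pathBox b t (i, c)) (hm : m ∈ pathBox b t (i, c)) (hvert : t (k - 1) = vert i) :
    k ≤ m := by
  rw [mem_pathBox] at hk hm
  have := stepCount_succ t (vert i) (k - 1)
  rw [Nat.sub_add_cancel hk.1.1, if_pos hvert] at this
  have := lt_of_stepCount_lt t (vert i) (k := k - 1) (k' := m) (by omega)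
  omega

lemma lt_of_mem_pathBox_same_row {b : ℕ} {t : ℕ → MStep} {x y : ℕ} {i : Fin 2}
    {c c' : Fin b} (hc : c < c') (hx : x ∈ pathBox b t (i, c)) (hy : y ∈ pathBox b t (i, c')) :
    x < y := by
  rw [mem_pathBox] at hx hy
  exact lt_of_stepCount_lt t (vert i) (by rw [hx.2.2, hy.2.2]; exact Nat.succ_lt_succ hc)

namespace IsRBMSeq

variable {b : ℕ} {t : ℕ → MStep} (ht : IsRBMSeq b t)
include ht

lemma count_vert (i : Fin 2) : stepCount t (vert i) (2 * b + 1) = b := by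
  fin_cases i
  exacts [ht.count_U, ht.count_D]

lemma stepCount_vert_pos {i : Fin 2} {j : ℕ} (hj : j < 2 * b + 1) (h : t j = horiz i) :
    0 < stepCount t (vert i) j := by
  fin_cases i
  · exact Nat.zero_lt_of_lt (ht.red j hj h)
  · exact ht.blue j hj h

lemma exists_mem_pathBox {k : ℕ} (h1 : 1 ≤ k) (h2 : k ≤ 2 * b + 1) :
    ∃ p, k ∈ pathBox b t p := by
  set i := (t (k - 1)).row
  have hpos : 0 < stepCount t (vert i) k := by
    rcases eq_vert_or_eq_horiz (t (k - 1)) with h | h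
    · exact (stepCount_pos_iff _ _).2 ⟨k - 1, by omega, h⟩
    · exact (ht.stepCount_vert_pos (by omega) h).trans_le (stepCount_mono _ _ (by omega))
  have hle : stepCount t (vert i) k ≤ b := ht.count_vert i ▸ stepCount_mono _ _ h2
  exact ⟨(i, ⟨stepCount t (vert i) k - 1, by omega⟩),
    mem_pathBox.2 ⟨⟨h1, h2⟩, rfl, by simp; omega⟩⟩

lemma exists_vert_mem_pathBox (p : Fin 2 × Fin b) :
    ∃ k ∈ pathBox b t p, t (k - 1) = vert p.1 := by
  obtain ⟨i, c⟩ := p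
  obtain ⟨j, hj, hje, hjc⟩ :=
    exists_stepCount_eq t (vert i) (by rw [ht.count_vert i]; exact c.isLt)
  refine ⟨j + 1, mem_pathBox.2 ⟨⟨by omega, by omega⟩, by simp [hje], ?_⟩,
    by simpa using hje⟩
  rw [stepCount_succ, if_pos hje, hjc]

lemma forall_mem_pathBox_le_iff {k : ℕ} {p : Fin 2 × Fin b} (hk : k ∈ pathBox b t p) :
    (∀ m ∈ pathBox b t p, k ≤ m) ↔ t (k - 1) = vert p.1 := by
  obtain ⟨i, c⟩ := p
  refine ⟨fun hmin => ?_, fun h m hm => le_of_mem_pathBox_of_eq_vert hk hm h⟩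
  obtain ⟨k₀, hk₀, hk₀v⟩ := ht.exists_vert_mem_pathBox (i, c)
  obtain rfl : k = k₀ :=
    le_antisymm (hmin k₀ hk₀) (le_of_mem_pathBox_of_eq_vert hk₀ hk hk₀v)
  exact hk₀v

/-- An entry of the top row is preceded by fewer down steps than it has up steps, so it lies
strictly before every bottom entry of the same or a later column. -/
lemma lt_of_mem_pathBox_top_bottom {x y : ℕ} {c c' : Fin b} (hc : c ≤ c')
    (hx : x ∈ pathBox b t (0, c)) (hy : y ∈ pathBox b t (1, c')) : x < y := by
  have hne : x ≠ y := fun h => by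
    have := eq_of_mem_pathBox hx (h ▸ hy)
    simp at this
  obtain ⟨⟨hx1, hx2⟩, hxrow, hxc⟩ := mem_pathBox.1 hx
  obtain ⟨-, -, hyc⟩ := mem_pathBox.1 hy
  simp only [vert_zero, vert_one] at hxc hyc
  have hballot : stepCount t D (x - 1) < stepCount t U x := by
    have hsucc := stepCount_succ t U (x - 1)
    rw [Nat.sub_add_cancel hx1] at hsucc
    rcases eq_vert_or_eq_horiz (t (x - 1)) with h | h <;>
      simp only [hxrow, vert_zero, horiz_zero] at h
    · have := ht.ballot (x - 1) (by omega)
      rw [if_pos h] at hsucc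
      omega
    · have := ht.red (x - 1) (by omega) h
      omega
  have : x - 1 < y := lt_of_stepCount_lt t D (by omega)
  omega

lemma lt_of_mem_pathBox {p q : Fin 2 × Fin b} (hpq : p < q) {x y : ℕ} (hx : x ∈ pathBox b t p)
    (hy : y ∈ pathBox b t q) : x < y := by
  obtain ⟨i, c⟩ := p
  obtain ⟨i', c'⟩ := q
  rw [Prod.mk_lt_mk] at hpq
  fin_cases i <;> fin_cases i'
  · exact lt_of_mem_pathBox_same_row (by simpa using hpq) hx hy
  · exact ht.lt_of_mem_pathBox_top_bottom (by rcases hpq with h | h; exacts [h.2, h.2.le]) hx hy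
  · simp at hpq
  · exact lt_of_mem_pathBox_same_row (by simpa using hpq) hx hy

lemma sum_card_pathBox : ∑ p, #(pathBox b t p) = 2 * b + 1 := by
  have hunion : univ.biUnion (pathBox b t) = Icc 1 (2 * b + 1) := by
    ext k
    simp only [mem_biUnion, mem_univ, true_and, mem_Icc]
    refine ⟨fun ⟨p, hp⟩ => mem_Icc.1 (pathBox_subset_Icc p hp), fun h =>
      ht.exists_mem_pathBox h.1 h.2⟩
  rw [← card_biUnion fun p _ q _ hpq => disjoint_pathBox hpq, hunion, Nat.card_Icc,
    Nat.add_sub_cancel]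

lemma isBSVT2 : IsBSVT2 b (pathBox b t) := by
  have hne (p : Fin 2 × Fin b) : (pathBox b t p).Nonempty :=
    let ⟨k, hk, _⟩ := ht.exists_vert_mem_pathBox p; ⟨k, hk⟩
  refine ⟨hne, fun k => ?_, fun p q hpq => disjoint_pathBox hpq,
    exists_eq_two_of_sum_eq_card_add_one (fun p => card_pos.2 (hne p)) ?_,
    fun p q hpq x hx y hy => ht.lt_of_mem_pathBox hpq hx hy⟩
  · exact ⟨fun h => ht.exists_mem_pathBox (mem_Icc.1 h).1 (mem_Icc.1 h).2,
      fun ⟨p, hp⟩ => pathBox_subset_Icc p hp⟩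
  · rw [ht.sum_card_pathBox]
    simp [two_mul]

lemma tableauStep_pathBox {k : ℕ} (h1 : 1 ≤ k) (h2 : k ≤ 2 * b + 1) :
    tableauStep (pathBox b t) k = t (k - 1) := by
  obtain ⟨⟨i, c⟩, hk⟩ := ht.exists_mem_pathBox h1 h2
  have hrow : (t (k - 1)).row = i := (mem_pathBox.1 hk).2.1
  have hmin : k = _ ↔ t (k - 1) = vert i :=
    (ht.isBSVT2.eq_boxMin_iff hk).trans (ht.forall_mem_pathBox_le_iff hk)
  rw [ht.isBSVT2.tableauStep_of_mem hk]
  split_ifs with h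
  · exact (hmin.1 h).symm
  · rcases eq_vert_or_eq_horiz (t (k - 1)) with h' | h' <;> rw [hrow] at h'
    · exact absurd (hmin.2 h') h
    · exact h'.symm

end IsRBMSeq

lemma IsRBMSeq.tableauPath_pathBox {b : ℕ} {s : Fin (2 * b + 1) → MStep}
    (ht : IsRBMSeq b (toSeq _ s)) : tableauPath (pathBox b (toSeq _ s)) = s := by
  funext j
  change tableauStep _ (j + 1) = s j
  rw [ht.tableauStep_pathBox (by omega) (by omega), Nat.add_sub_cancel, toSeq_of_lt _ j.isLt]

theorem stmt_16_general (b : ℕ) :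
    Nonempty
      ({S : Fin 2 × Fin b → Finset ℕ // IsBSVT2 b S} ≃
        {s : Fin (2 * b + 1) → MStep //
          IsRBM (2 * b + 1) s ∧
          (Finset.univ.filter fun j => s j = MStep.Hr ∨ s j = MStep.Hb).card = 1}) :=
  ⟨{ toFun := fun S => ⟨tableauPath S.1, (isRBM_and_card_eq_one_iff _).2 S.2.isRBMSeq⟩
     invFun := fun s => ⟨pathBox b (toSeq _ s.1), ((isRBM_and_card_eq_one_iff _).1 s.2).isBSVT2⟩
     left_inv := fun S => Subtype.ext S.2.pathBox_tableauPath
     right_inv := fun s =>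
       Subtype.ext ((isRBM_and_card_eq_one_iff _).1 s.2).tableauPath_pathBox }⟩

/-- standard barely set-valued tableaux of shape `2×b` are in bijection
with restricted bicolored Motzkin paths of length `2b+1` with exactly one horizontal
step. -/
theorem stmt_16 (b : ℕ) (hb : 1 ≤ b) :
    Nonempty
      ({S : Fin 2 × Fin b → Finset ℕ // IsBSVT2 b S} ≃
        {s : Fin (2 * b + 1) → MStep //
          IsRBM (2 * b + 1) s ∧
          (Finset.univ.filter fun j => s j = MStep.Hr ∨ s j = MStep.Hb).card = 1}) :=
  stmt_16_general b
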